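/- arXiv:2410.20786 — 2 statements merged into one kernel-verified Lean document; each statement's English description precedes it below -/
import Mathlib

section
/- Min-cost stage reward-retention bound (Lemma A.3): in a finite discounted MDP, let δ > 0, g ∈ ℝ, n ≥ 1, let R : S → A → ℝ be a reward signal, and let π_0, π_1, …, π_n be policies such that for every i < n: (π_i s a = 0 → π_{i+1} s a = 0), D̄_KL(π_{i+1}‖π_i) ≤ δ, and the reward surrogate constraint J_R(π_i) + (1/(1−γ)) · 𝔸_R(π_i, π_{i+1}) ≥ g holds. Then J_R(π_n) ≥ g − (√(2δ) · γ / (1−γ)²) · ∑_{j=1}^{n} ε_R(π_{j−1}, π_j). -/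
open Real BigOperators

/-- Induced transition matrix of policy `pol`: `P_pol(s,s') = ∑ a, pol s a * P s a s'`. -/
noncomputable def transMat {S A : Type*} [Fintype A] (P : S → A → S → ℝ)
    (pol : S → A → ℝ) : Matrix S S ℝ :=
  fun s s' => ∑ a, pol s a * P s a s'

/-- Discounted state visitation distribution
`d_pol(s) = (1-γ) ∑ₜ γ^t ∑_{s0} ρ0 s0 * (P_pol^t)(s0,s)`. -/
noncomputable def dVisit {S A : Type*} [Fintype S] [DecidableEq S] [Fintype A]
    (P : S → A → S → ℝ) (γ : ℝ) (ρ0 : S → ℝ) (pol : S → A → ℝ) (s : S) : ℝ :=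
  (1 - γ) * ∑' t : ℕ, γ ^ t * ∑ s0, ρ0 s0 * (transMat P pol ^ t) s0 s

/-- Value function of signal `F` under policy `pol`. -/
noncomputable def Vfun {S A : Type*} [Fintype S] [DecidableEq S] [Fintype A]
    (P : S → A → S → ℝ) (γ : ℝ) (F : S → A → ℝ) (pol : S → A → ℝ) (s : S) : ℝ :=
  ∑' t : ℕ, γ ^ t * ∑ s', (transMat P pol ^ t) s s' * ∑ a, pol s' a * F s' a

/-- Return `J_F(pol) = ∑ s, ρ0 s * V_F^pol(s)`. -/
noncomputable def Jret {S A : Type*} [Fintype S] [DecidableEq S] [Fintype A]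
    (P : S → A → S → ℝ) (γ : ℝ) (ρ0 : S → ℝ) (F : S → A → ℝ) (pol : S → A → ℝ) : ℝ :=
  ∑ s, ρ0 s * Vfun P γ F pol s

/-- Action-value function `Q_F^pol(s,a) = F s a + γ ∑_{s'} P s a s' * V_F^pol(s')`. -/
noncomputable def Qfun {S A : Type*} [Fintype S] [DecidableEq S] [Fintype A]
    (P : S → A → S → ℝ) (γ : ℝ) (F : S → A → ℝ) (pol : S → A → ℝ) (s : S) (a : A) : ℝ :=
  F s a + γ * ∑ s', P s a s' * Vfun P γ F pol s'

/-- Advantage function `A_F^pol(s,a) = Q_F^pol(s,a) - V_F^pol(s)`. -/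
noncomputable def Adv {S A : Type*} [Fintype S] [DecidableEq S] [Fintype A]
    (P : S → A → S → ℝ) (γ : ℝ) (F : S → A → ℝ) (pol : S → A → ℝ) (s : S) (a : A) : ℝ :=
  Qfun P γ F pol s a - Vfun P γ F pol s

/-- Expected surrogate advantage
`𝔸_F(pol,pol') = ∑ s, d_pol(s) ∑ a, pol' s a * A_F^pol(s,a)`. -/
noncomputable def surrAdv {S A : Type*} [Fintype S] [DecidableEq S] [Fintype A]
    (P : S → A → S → ℝ) (γ : ℝ) (ρ0 : S → ℝ) (F : S → A → ℝ)
    (pol pol' : S → A → ℝ) : ℝ :=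
  ∑ s, dVisit P γ ρ0 pol s * ∑ a, pol' s a * Adv P γ F pol s a

/-- `ε_F(pol,pol') = max_s |∑ a, pol' s a * A_F^pol(s,a)|`. -/
noncomputable def epsAdv {S A : Type*} [Fintype S] [DecidableEq S] [Fintype A] [Nonempty S]
    (P : S → A → S → ℝ) (γ : ℝ) (F : S → A → ℝ) (pol pol' : S → A → ℝ) : ℝ :=
  Finset.univ.sup' Finset.univ_nonempty fun s => |∑ a, pol' s a * Adv P γ F pol s a|

/-- Per-state KL divergence `KL(pol'‖pol)(s) = ∑ a, pol' s a * log (pol' s a / pol s a)`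
(with the convention `0 * log 0 = 0`, automatic since `Real.log 0 = 0`). -/
noncomputable def klState {S A : Type*} [Fintype A] (pol' pol : S → A → ℝ) (s : S) : ℝ :=
  ∑ a, pol' s a * Real.log (pol' s a / pol s a)

/-- Averaged KL divergence `D̄_KL(pol'‖pol) = ∑ s, d_pol(s) * KL(pol'‖pol)(s)`. -/
noncomputable def avgKL {S A : Type*} [Fintype S] [DecidableEq S] [Fintype A]
    (P : S → A → S → ℝ) (γ : ℝ) (ρ0 : S → ℝ) (pol' pol : S → A → ℝ) : ℝ :=
  ∑ s, dVisit P γ ρ0 pol s * klState pol' pol s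


/-!
The performance difference lemma gives `(1 - γ) (J(π') - J(π)) = ⟨d_π', Ā⟩`, where
`Ā s = ∑ₐ π'(a|s) A^π(s, a)`, while the surrogate objective uses `⟨d_π, Ā⟩`; the two differ by at
most `‖d_π' - d_π‖₁ ε(π, π')`. The fixed-point equation `d = (1 - γ) ρ₀ + γ d P_π` of the
visitation distribution gives `(1 - γ) ‖d_π' - d_π‖₁ ≤ γ E_{d_π} ‖π' - π‖₁`, and Pinsker's inequality
with Cauchy–Schwarz bounds `E_{d_π} ‖π' - π‖₁` by `√(2 D̄_KL(π'‖π)) ≤ √(2δ)`. Applied to the last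
stage this yields `J(π_n) ≥ g - √(2δ) γ / (1 - γ)² ε(π_{n-1}, π_n)`, and the other summands are
nonnegative.
-/

open Finset Matrix InformationTheory

section Pinsker

lemma apply_le_apply_of_sub_mul_deriv_nonneg {f f' : ℝ → ℝ} {c x : ℝ} (hc : 0 < c) (hx : 0 < x)
    (hf : ∀ y, 0 < y → HasDerivAt f (f' y) y) (hf' : ∀ y, 0 < y → 0 ≤ (y - c) * f' y) :
    f c ≤ f x := by
  have hcont : ∀ D ⊆ Set.Ioi (0 : ℝ), ContinuousOn f D := fun D hD y hy =>
    (hf y (hD hy)).continuousAt.continuousWithinAt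
  rcases le_total c x with hcx | hxc
  · refine monotoneOn_of_hasDerivWithinAt_nonneg (f' := f') (convex_Ici c)
      (hcont _ fun y hy => hc.trans_le hy) (fun y hy => ?_) (fun y hy => ?_) Set.self_mem_Ici hcx hcx
    all_goals rw [interior_Ici] at hy
    · exact (hf y (hc.trans hy)).hasDerivWithinAt
    · exact nonneg_of_mul_nonneg_right (hf' y (hc.trans hy)) (sub_pos.2 hy)
  · refine antitoneOn_of_hasDerivWithinAt_nonpos (f' := f') (convex_Ioc 0 c)
      (hcont _ fun y hy => hy.1) (fun y hy => ?_) (fun y hy => ?_) ⟨hx, hxc⟩ ⟨hc, le_rfl⟩ hxc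
    all_goals rw [interior_Ioc] at hy
    · exact (hf y hy.1).hasDerivWithinAt
    · exact nonpos_of_mul_nonneg_right (hf' y hy.1) (sub_neg.2 hy.2)

lemma sub_one_mul_add_one_mul_log_sub_nonneg {x : ℝ} (hx : 0 < x) :
    0 ≤ (x - 1) * ((x + 1) * log x - 2 * (x - 1)) := by
  set ψ : ℝ → ℝ := fun y => (y + 1) * log y - 2 * (y - 1)
  have hψ : ∀ y, 0 < y → HasDerivAt ψ (log y + (1 + y⁻¹) - 2) y := fun y hy => by
    refine ((((hasDerivAt_id y).add_const 1).mul (hasDerivAt_log hy.ne')).sub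
      (((hasDerivAt_id y).sub_const 1).const_mul 2)).congr_deriv ?_
    simp only [id]
    rw [add_mul, mul_inv_cancel₀ hy.ne']
    ring
  have hmono : MonotoneOn ψ (Set.Ioi 0) := by
    refine monotoneOn_of_hasDerivWithinAt_nonneg (convex_Ioi 0)
      (fun y hy => (hψ y hy).continuousAt.continuousWithinAt)
      (fun y hy => (hψ y (interior_subset hy)).hasDerivWithinAt) fun y hy => ?_
    linarith [one_sub_inv_le_log_of_pos (interior_subset hy : 0 < y)]
  have hψ1 : ψ 1 = 0 := by simp [ψ]
  rcases le_total 1 x with h | h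
  · exact mul_nonneg (by linarith) (hψ1 ▸ hmono (Set.mem_Ioi.2 one_pos) hx h)
  · exact mul_nonneg_of_nonpos_of_nonpos (by linarith) (hψ1 ▸ hmono hx (Set.mem_Ioi.2 one_pos) h)

lemma three_mul_sq_sub_one_le_klFun {x : ℝ} (hx : 0 ≤ x) :
    3 * (x - 1) ^ 2 ≤ 2 * (x + 2) * klFun x := by
  rcases hx.eq_or_lt with rfl | hx
  · norm_num [klFun_zero]
  set φ : ℝ → ℝ := fun y => 2 * (y + 2) * klFun y - 3 * (y - 1) ^ 2
  have hφ : ∀ y, 0 < y → HasDerivAt φ (4 * ((y + 1) * log y - 2 * (y - 1))) y := fun y hy => by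
    refine ((((hasDerivAt_id y).add_const 2).const_mul 2).mul (hasDerivAt_klFun hy.ne')).sub
      ((((hasDerivAt_id y).sub_const 1).pow 2).const_mul 3) |>.congr_deriv ?_
    simp only [id, klFun]
    ring
  have := apply_le_apply_of_sub_mul_deriv_nonneg one_pos hx hφ fun y hy => by
    nlinarith [sub_one_mul_add_one_mul_log_sub_nonneg hy]
  simpa [φ, klFun_one] using this

lemma three_mul_sq_sub_le_mul_klFun_div {p q : ℝ} (hp : 0 ≤ p) (hq : 0 ≤ q)
    (hpq : q = 0 → p = 0) : 3 * (p - q) ^ 2 ≤ 2 * (p + 2 * q) * (q * klFun (p / q)) := by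
  rcases hq.eq_or_lt with rfl | hq
  · simp [hpq rfl]
  have h := mul_le_mul_of_nonneg_left (three_mul_sq_sub_one_le_klFun (div_nonneg hp hq.le))
    (sq_nonneg q)
  refine le_of_eq_of_le ?_ (h.trans_eq ?_) <;> field_simp

lemma mul_log_div_eq_mul_klFun_div {p q : ℝ} (hpq : q = 0 → p = 0) :
    p * log (p / q) = q * klFun (p / q) + p - q := by
  rcases eq_or_ne q 0 with rfl | hq
  · simp [hpq rfl]
  rw [klFun]
  field_simp
  ring

/-- Pinsker's inequality: Cauchy–Schwarz with the weights `p + 2 q`, which sum to `3`. -/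
theorem sq_sum_abs_sub_le_two_mul_sum_mul_log_div {ι : Type*} [Fintype ι] {p q : ι → ℝ}
    (hp0 : ∀ i, 0 ≤ p i) (hq0 : ∀ i, 0 ≤ q i) (hp1 : ∑ i, p i = 1) (hq1 : ∑ i, q i = 1)
    (hpq : ∀ i, q i = 0 → p i = 0) :
    (∑ i, |p i - q i|) ^ 2 ≤ 2 * ∑ i, p i * log (p i / q i) := by
  have hcs := sum_sq_le_sum_mul_sum_of_sq_le_mul univ (r := fun i => |p i - q i|)
    (f := fun i => p i + 2 * q i) (g := fun i => 2 / 3 * (q i * klFun (p i / q i)))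
    (fun i _ => by linarith [hp0 i, hq0 i])
    (fun i _ => mul_nonneg (by norm_num)
      (mul_nonneg (hq0 i) (klFun_nonneg (div_nonneg (hp0 i) (hq0 i)))))
    (fun i _ => by
      rw [sq_abs]
      linarith [three_mul_sq_sub_le_mul_klFun_div (hp0 i) (hq0 i) (hpq i)])
  have hf : ∑ i, (p i + 2 * q i) = 3 := by
    rw [sum_add_distrib, ← mul_sum, hp1, hq1]
    norm_num
  have hg : ∑ i, 2 / 3 * (q i * klFun (p i / q i)) = 2 / 3 * ∑ i, p i * log (p i / q i) := by
    simp_rw [← mul_sum, mul_log_div_eq_mul_klFun_div (hpq _), sum_sub_distrib, sum_add_distrib,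
      hp1, hq1]
    ring
  rw [hf, hg] at hcs
  linarith

end Pinsker

section HasSumMatrix

variable {ι m n R : Type*} [NonUnitalNonAssocSemiring R] [TopologicalSpace R]
  [IsTopologicalSemiring R] {f : ι → Matrix m n R} {N : Matrix m n R}

lemma HasSum.vecMul_apply [Fintype m] (h : HasSum f N) (v : m → R) (j : n) :
    HasSum (fun t => (v ᵥ* f t) j) ((v ᵥ* N) j) :=
  hasSum_sum fun i _ => (Pi.hasSum.mp (Pi.hasSum.mp h i) j).mul_left (v i)

lemma HasSum.mulVec_apply [Fintype n] (h : HasSum f N) (v : n → R) (i : m) :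
    HasSum (fun t => (f t *ᵥ v) i) ((N *ᵥ v) i) :=
  hasSum_sum fun j _ => (Pi.hasSum.mp (Pi.hasSum.mp h i) j).mul_right (v j)

end HasSumMatrix

lemma sum_abs_vecMul_le {m n R : Type*} [Fintype m] [Fintype n] [CommRing R] [LinearOrder R]
    [IsStrictOrderedRing R] (v : m → R) (X : Matrix m n R) :
    ∑ j, |(v ᵥ* X) j| ≤ ∑ i, |v i| * ∑ j, |X i j| :=
  calc ∑ j, |(v ᵥ* X) j| ≤ ∑ j, ∑ i, |v i| * |X i j| :=
        sum_le_sum fun j _ => (abs_sum_le_sum_abs _ _).trans_eq (by simp only [abs_mul])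
    _ = ∑ i, |v i| * ∑ j, |X i j| := by rw [sum_comm]; simp only [mul_sum]

section DiscountedPowSum

variable {n : Type*} [Fintype n] [DecidableEq n] {M : Matrix n n ℝ} {γ : ℝ}

/-- The resolvent `(1 - γ M)⁻¹`, as the series through which `dVisit` and `Vfun` are defined. -/
noncomputable def discountedPowSum (γ : ℝ) (M : Matrix n n ℝ) : Matrix n n ℝ :=
  ∑' t : ℕ, γ ^ t • M ^ t

lemma hasSum_discountedPowSum (hM : M ∈ rowStochastic ℝ n) (hγ0 : 0 ≤ γ) (hγ1 : γ < 1) :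
    HasSum (fun t : ℕ => γ ^ t • M ^ t) (discountedPowSum γ M) := by
  refine Summable.hasSum (Pi.summable.mpr fun i => Pi.summable.mpr fun j => ?_)
  refine (summable_geometric_of_lt_one hγ0 hγ1).of_nonneg_of_le (fun t => ?_) (fun t => ?_)
  · exact mul_nonneg (pow_nonneg hγ0 t) (nonneg_of_mem_rowStochastic (pow_mem hM t))
  · exact mul_le_of_le_one_right (pow_nonneg hγ0 t) (le_one_of_mem_rowStochastic (pow_mem hM t))

lemma discountedPowSum_nonneg (hM : M ∈ rowStochastic ℝ n) (hγ0 : 0 ≤ γ) (hγ1 : γ < 1)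
    (i j : n) : 0 ≤ discountedPowSum γ M i j :=
  (Pi.hasSum.mp (Pi.hasSum.mp (hasSum_discountedPowSum hM hγ0 hγ1) i) j).nonneg fun t =>
    mul_nonneg (pow_nonneg hγ0 t) (nonneg_of_mem_rowStochastic (pow_mem hM t))

lemma discountedPowSum_eq_one_add (hM : M ∈ rowStochastic ℝ n) (hγ0 : 0 ≤ γ) (hγ1 : γ < 1) :
    discountedPowSum γ M = 1 + γ • (discountedPowSum γ M * M) := by
  have h := hasSum_discountedPowSum hM hγ0 hγ1
  have hshift : HasSum (fun t : ℕ => γ ^ (t + 1) • M ^ (t + 1))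
      (γ • (discountedPowSum γ M * M)) := by
    have e : (fun t : ℕ => γ ^ (t + 1) • M ^ (t + 1)) = fun t => γ • (γ ^ t • M ^ t * M) := by
      funext t
      rw [pow_succ', pow_succ, smul_mul_assoc, mul_smul]
    rw [e]
    exact (h.mul_right M).const_smul γ
  have := ((hasSum_nat_add_iff' 1).mpr h).unique hshift
  simp only [range_one, sum_singleton, pow_zero, one_smul] at this
  exact eq_add_of_sub_eq' this

end DiscountedPowSum

section MDP

variable {S A : Type*} [Fintype S] [Fintype A] {P : S → A → S → ℝ} {γ : ℝ}
  {ρ0 : S → ℝ} {F : S → A → ℝ} {pol pol' : S → A → ℝ}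

lemma sum_abs_transMat_sub_le (hP0 : ∀ s a s', 0 ≤ P s a s') (hP1 : ∀ s a, ∑ s', P s a s' = 1)
    (s : S) : ∑ s', |transMat P pol' s s' - transMat P pol s s'| ≤ ∑ a, |pol' s a - pol s a| := by
  have e : ∀ s', transMat P pol' s s' - transMat P pol s s' = ((pol' s - pol s) ᵥ* P s) s' :=
    fun s' => by simp [transMat, vecMul, dotProduct, sub_mul]
  simp only [e]
  refine (sum_abs_vecMul_le _ _).trans_eq (sum_congr rfl fun a _ => ?_)
  simp [abs_of_nonneg (hP0 s a _), hP1]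

variable [DecidableEq S]

lemma transMat_mem_rowStochastic (hP0 : ∀ s a s', 0 ≤ P s a s')
    (hP1 : ∀ s a, ∑ s', P s a s' = 1) (hpol0 : ∀ s a, 0 ≤ pol s a)
    (hpol1 : ∀ s, ∑ a, pol s a = 1) : transMat P pol ∈ rowStochastic ℝ S := by
  refine mem_rowStochastic_iff_sum.2
    ⟨fun s s' => sum_nonneg fun a _ => mul_nonneg (hpol0 s a) (hP0 s a s'), fun s => ?_⟩
  simp only [transMat]
  rw [sum_comm]
  simp [← mul_sum, hP1, hpol1]

lemma dVisit_eq_vecMul (hM : transMat P pol ∈ rowStochastic ℝ S) (hγ0 : 0 ≤ γ) (hγ1 : γ < 1) :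
    dVisit P γ ρ0 pol = (1 - γ) • (ρ0 ᵥ* discountedPowSum γ (transMat P pol)) := by
  funext s
  have h := (hasSum_discountedPowSum hM hγ0 hγ1).vecMul_apply ρ0 s
  simp only [vecMul_smul, Pi.smul_apply, smul_eq_mul] at h
  exact congrArg ((1 - γ) * ·) h.tsum_eq

lemma Vfun_eq_mulVec (hM : transMat P pol ∈ rowStochastic ℝ S) (hγ0 : 0 ≤ γ) (hγ1 : γ < 1) :
    Vfun P γ F pol = discountedPowSum γ (transMat P pol) *ᵥ fun s => ∑ a, pol s a * F s a := by
  funext s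
  have h := (hasSum_discountedPowSum hM hγ0 hγ1).mulVec_apply (fun s => ∑ a, pol s a * F s a) s
  simp only [smul_mulVec, Pi.smul_apply, smul_eq_mul] at h
  exact h.tsum_eq

lemma dVisit_nonneg (hM : transMat P pol ∈ rowStochastic ℝ S) (hγ0 : 0 ≤ γ) (hγ1 : γ < 1)
    (hρ0 : ∀ s, 0 ≤ ρ0 s) (s : S) : 0 ≤ dVisit P γ ρ0 pol s := by
  rw [dVisit_eq_vecMul hM hγ0 hγ1]
  exact mul_nonneg (sub_nonneg.2 hγ1.le) (sum_nonneg fun s0 _ =>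
    mul_nonneg (hρ0 s0) (discountedPowSum_nonneg hM hγ0 hγ1 s0 s))

lemma dVisit_eq_add_vecMul (hM : transMat P pol ∈ rowStochastic ℝ S) (hγ0 : 0 ≤ γ)
    (hγ1 : γ < 1) :
    dVisit P γ ρ0 pol = (1 - γ) • ρ0 + γ • (dVisit P γ ρ0 pol ᵥ* transMat P pol) := by
  rw [dVisit_eq_vecMul hM hγ0 hγ1]
  conv_lhs => rw [discountedPowSum_eq_one_add hM hγ0 hγ1]
  rw [vecMul_add, vecMul_one, vecMul_smul, ← vecMul_vecMul, smul_vecMul, smul_add, smul_comm]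

lemma sum_dVisit (hM : transMat P pol ∈ rowStochastic ℝ S) (hγ0 : 0 ≤ γ) (hγ1 : γ < 1)
    (hρ1 : ∑ s, ρ0 s = 1) : ∑ s, dVisit P γ ρ0 pol s = 1 := by
  have h := congrArg (· ⬝ᵥ (1 : S → ℝ)) (dVisit_eq_add_vecMul (ρ0 := ρ0) hM hγ0 hγ1)
  simp only [add_dotProduct, smul_dotProduct, ← dotProduct_mulVec, hM.2] at h
  simp only [dotProduct_one, hρ1, smul_eq_mul] at h
  have : (1 - γ) * ∑ s, dVisit P γ ρ0 pol s = (1 - γ) * 1 := by linarith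
  exact mul_left_cancel₀ (sub_ne_zero.2 hγ1.ne') this

lemma dVisit_dotProduct_eq_mul_Jret (hM : transMat P pol ∈ rowStochastic ℝ S) (hγ0 : 0 ≤ γ)
    (hγ1 : γ < 1) :
    dVisit P γ ρ0 pol ⬝ᵥ (fun s => ∑ a, pol s a * F s a) = (1 - γ) * Jret P γ ρ0 F pol := by
  rw [dVisit_eq_vecMul hM hγ0 hγ1, smul_dotProduct, ← dotProduct_mulVec,
    ← Vfun_eq_mulVec hM hγ0 hγ1]
  rfl

noncomputable def expectedAdv (P : S → A → S → ℝ) (γ : ℝ) (F : S → A → ℝ)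
    (pol pol' : S → A → ℝ) (s : S) : ℝ :=
  ∑ a, pol' s a * Adv P γ F pol s a

lemma expectedAdv_eq (hpol'1 : ∀ s, ∑ a, pol' s a = 1) :
    expectedAdv P γ F pol pol' = (fun s => ∑ a, pol' s a * F s a)
      + γ • (transMat P pol' *ᵥ Vfun P γ F pol) - Vfun P γ F pol := by
  funext s
  have hV : ∑ a, pol' s a * Vfun P γ F pol s = Vfun P γ F pol s := by
    rw [← sum_mul, hpol'1, one_mul]
  simp only [expectedAdv, Adv, Qfun, mul_sub, mul_add, sum_sub_distrib, sum_add_distrib, hV,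
    Pi.add_apply, Pi.sub_apply, Pi.smul_apply, smul_eq_mul, transMat, mulVec, dotProduct, mul_sum,
    sum_mul]
  rw [sum_comm]
  congr 2
  exact sum_congr rfl fun s' _ => sum_congr rfl fun a _ => by ring

lemma performance_difference (hM' : transMat P pol' ∈ rowStochastic ℝ S) (hγ0 : 0 ≤ γ)
    (hγ1 : γ < 1) (hpol'1 : ∀ s, ∑ a, pol' s a = 1) :
    (1 - γ) * (Jret P γ ρ0 F pol' - Jret P γ ρ0 F pol)
      = dVisit P γ ρ0 pol' ⬝ᵥ expectedAdv P γ F pol pol' := by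
  have hrec := dVisit_eq_add_vecMul (ρ0 := ρ0) hM' hγ0 hγ1
  set d' := dVisit P γ ρ0 pol'
  set V := Vfun P γ F pol
  have hdV : d' ⬝ᵥ V = (1 - γ) * Jret P γ ρ0 F pol + γ * ((d' ᵥ* transMat P pol') ⬝ᵥ V) := by
    conv_lhs => rw [hrec]
    rw [add_dotProduct, smul_dotProduct, smul_dotProduct]
    rfl
  rw [expectedAdv_eq hpol'1, dotProduct_sub, dotProduct_add,
    dVisit_dotProduct_eq_mul_Jret hM' hγ0 hγ1, dotProduct_smul, dotProduct_mulVec, hdV,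
    smul_eq_mul]
  ring

lemma sub_one_mul_sum_abs_dVisit_sub_le (hP0 : ∀ s a s', 0 ≤ P s a s')
    (hP1 : ∀ s a, ∑ s', P s a s' = 1) (hM : transMat P pol ∈ rowStochastic ℝ S)
    (hM' : transMat P pol' ∈ rowStochastic ℝ S) (hγ0 : 0 ≤ γ) (hγ1 : γ < 1)
    (hρ0 : ∀ s, 0 ≤ ρ0 s) :
    (1 - γ) * ∑ s, |dVisit P γ ρ0 pol' s - dVisit P γ ρ0 pol s|
      ≤ γ * ∑ s, dVisit P γ ρ0 pol s * ∑ a, |pol' s a - pol s a| := by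
  have hd0 := dVisit_nonneg hM hγ0 hγ1 hρ0
  have hrec := dVisit_eq_add_vecMul (ρ0 := ρ0) hM hγ0 hγ1
  have hrec' := dVisit_eq_add_vecMul (ρ0 := ρ0) hM' hγ0 hγ1
  set d := dVisit P γ ρ0 pol
  set d' := dVisit P γ ρ0 pol'
  set M := transMat P pol
  set M' := transMat P pol'
  have he : d' - d = γ • ((d' - d) ᵥ* M' + d ᵥ* (M' - M)) := by
    conv_lhs => rw [hrec', hrec]
    rw [sub_vecMul, vecMul_sub]
    module
  have h1 : ∑ s, |((d' - d) ᵥ* M') s| ≤ ∑ s, |d' s - d s| :=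
    (sum_abs_vecMul_le _ _).trans_eq (sum_congr rfl fun s _ => by
      simp [abs_of_nonneg (nonneg_of_mem_rowStochastic hM'), sum_row_of_mem_rowStochastic hM'])
  have h2 : ∑ s, |(d ᵥ* (M' - M)) s| ≤ ∑ s, d s * ∑ a, |pol' s a - pol s a| :=
    (sum_abs_vecMul_le _ _).trans (sum_le_sum fun s _ => by
      rw [abs_of_nonneg (hd0 s)]
      exact mul_le_mul_of_nonneg_left (sum_abs_transMat_sub_le hP0 hP1 s) (hd0 s))
  have h3 : ∑ s, |d' s - d s|
      ≤ γ * (∑ s, |d' s - d s| + ∑ s, d s * ∑ a, |pol' s a - pol s a|) :=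
    calc ∑ s, |d' s - d s| = ∑ s, |(d' - d) s| := rfl
      _ = γ * ∑ s, |((d' - d) ᵥ* M' + d ᵥ* (M' - M)) s| := by
          conv_lhs => rw [he]
          simp only [Pi.smul_apply, smul_eq_mul, abs_mul, abs_of_nonneg hγ0, ← mul_sum]
      _ ≤ γ * (∑ s, |((d' - d) ᵥ* M') s| + ∑ s, |(d ᵥ* (M' - M)) s|) := by
          rw [← sum_add_distrib]
          exact mul_le_mul_of_nonneg_left (sum_le_sum fun s _ => abs_add_le _ _) hγ0
      _ ≤ _ := mul_le_mul_of_nonneg_left (add_le_add h1 h2) hγ0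
  linarith

lemma sum_dVisit_mul_sum_abs_sub_le_sqrt (hM : transMat P pol ∈ rowStochastic ℝ S)
    (hγ0 : 0 ≤ γ) (hγ1 : γ < 1) (hρ0 : ∀ s, 0 ≤ ρ0 s) (hρ1 : ∑ s, ρ0 s = 1)
    (hpol0 : ∀ s a, 0 ≤ pol s a) (hpol1 : ∀ s, ∑ a, pol s a = 1)
    (hpol'0 : ∀ s a, 0 ≤ pol' s a) (hpol'1 : ∀ s, ∑ a, pol' s a = 1)
    (habs : ∀ s a, pol s a = 0 → pol' s a = 0) :
    ∑ s, dVisit P γ ρ0 pol s * ∑ a, |pol' s a - pol s a| ≤ √(2 * avgKL P γ ρ0 pol' pol) := by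
  have hd0 := dVisit_nonneg hM hγ0 hγ1 hρ0
  have hpinsker : ∀ s, (∑ a, |pol' s a - pol s a|) ^ 2 ≤ 2 * klState pol' pol s := fun s =>
    sq_sum_abs_sub_le_two_mul_sum_mul_log_div (hpol'0 s) (hpol0 s) (hpol'1 s) (hpol1 s) (habs s)
  have hcs := sum_sq_le_sum_mul_sum_of_sq_le_mul univ
    (r := fun s => dVisit P γ ρ0 pol s * ∑ a, |pol' s a - pol s a|) (f := dVisit P γ ρ0 pol)
    (g := fun s => dVisit P γ ρ0 pol s * (2 * klState pol' pol s)) (fun s _ => hd0 s)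
    (fun s _ => mul_nonneg (hd0 s) ((sq_nonneg _).trans (hpinsker s)))
    (fun s _ => by
      rw [mul_pow, sq, mul_assoc]
      exact mul_le_mul_of_nonneg_left (mul_le_mul_of_nonneg_left (hpinsker s) (hd0 s)) (hd0 s))
  have hkl : ∑ s, dVisit P γ ρ0 pol s * (2 * klState pol' pol s)
      = 2 * avgKL P γ ρ0 pol' pol := by
    simp only [avgKL, mul_sum, mul_left_comm (2 : ℝ)]
  rw [sum_dVisit hM hγ0 hγ1 hρ1, one_mul, hkl] at hcs
  exact (le_abs_self _).trans (Real.abs_le_sqrt hcs)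

lemma abs_expectedAdv_le_epsAdv [Nonempty S] (s : S) :
    |expectedAdv P γ F pol pol' s| ≤ epsAdv P γ F pol pol' :=
  le_sup' (fun s => |expectedAdv P γ F pol pol' s|) (mem_univ s)

lemma epsAdv_nonneg [Nonempty S] : 0 ≤ epsAdv P γ F pol pol' :=
  (abs_nonneg _).trans (abs_expectedAdv_le_epsAdv (Classical.arbitrary S))

lemma Jret_add_surrAdv_sub_le [Nonempty S] (hP0 : ∀ s a s', 0 ≤ P s a s')
    (hP1 : ∀ s a, ∑ s', P s a s' = 1) (hγ0 : 0 ≤ γ) (hγ1 : γ < 1)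
    (hρ0 : ∀ s, 0 ≤ ρ0 s) (hρ1 : ∑ s, ρ0 s = 1)
    (hpol0 : ∀ s a, 0 ≤ pol s a) (hpol1 : ∀ s, ∑ a, pol s a = 1)
    (hpol'0 : ∀ s a, 0 ≤ pol' s a) (hpol'1 : ∀ s, ∑ a, pol' s a = 1)
    (habs : ∀ s a, pol s a = 0 → pol' s a = 0) {δ : ℝ} (hKL : avgKL P γ ρ0 pol' pol ≤ δ) :
    Jret P γ ρ0 F pol + 1 / (1 - γ) * surrAdv P γ ρ0 F pol pol'
      - √(2 * δ) * γ / (1 - γ) ^ 2 * epsAdv P γ F pol pol' ≤ Jret P γ ρ0 F pol' := by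
  have hM := transMat_mem_rowStochastic hP0 hP1 hpol0 hpol1
  have hM' := transMat_mem_rowStochastic hP0 hP1 hpol'0 hpol'1
  set d := dVisit P γ ρ0 pol
  set d' := dVisit P γ ρ0 pol'
  set ε := epsAdv P γ F pol pol'
  set L := ∑ s, |d' s - d s|
  have hpdl : (1 - γ) * (Jret P γ ρ0 F pol' - Jret P γ ρ0 F pol)
      = d' ⬝ᵥ expectedAdv P γ F pol pol' := performance_difference hM' hγ0 hγ1 hpol'1
  have hsurr : surrAdv P γ ρ0 F pol pol' = d ⬝ᵥ expectedAdv P γ F pol pol' := rfl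
  have hgap : d ⬝ᵥ expectedAdv P γ F pol pol' - d' ⬝ᵥ expectedAdv P γ F pol pol' ≤ L * ε := by
    rw [← sub_dotProduct]
    refine (le_abs_self _).trans ((abs_sum_le_sum_abs _ _).trans ?_)
    rw [sum_mul]
    refine sum_le_sum fun s _ => ?_
    rw [abs_mul, abs_sub_comm]
    exact mul_le_mul_of_nonneg_left (abs_expectedAdv_le_epsAdv s) (abs_nonneg _)
  have hL : (1 - γ) * L ≤ γ * √(2 * δ) :=
    (sub_one_mul_sum_abs_dVisit_sub_le hP0 hP1 hM hM' hγ0 hγ1 hρ0).trans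
      (mul_le_mul_of_nonneg_left ((sum_dVisit_mul_sum_abs_sub_le_sqrt hM hγ0 hγ1 hρ0 hρ1 hpol0
        hpol1 hpol'0 hpol'1 habs).trans (Real.sqrt_le_sqrt (by linarith))) hγ0)
  have hkey : (1 - γ) * surrAdv P γ ρ0 F pol pol' - γ * √(2 * δ) * ε
      ≤ (Jret P γ ρ0 F pol' - Jret P γ ρ0 F pol) * (1 - γ) ^ 2 := by
    have hε : 0 ≤ ε := epsAdv_nonneg
    nlinarith [mul_le_mul_of_nonneg_right hL hε]
  have e : 1 / (1 - γ) * surrAdv P γ ρ0 F pol pol' - √(2 * δ) * γ / (1 - γ) ^ 2 * ε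
      = ((1 - γ) * surrAdv P γ ρ0 F pol pol' - γ * √(2 * δ) * ε) / (1 - γ) ^ 2 := by
    field_simp
  have := (div_le_iff₀ (pow_pos (sub_pos.2 hγ1) 2)).2 hkey
  linarith

end MDP

theorem min_cost_stage_reward_retention_general {S A : Type*} [Fintype S] [DecidableEq S] [Fintype A] [Nonempty S]
    (P : S → A → S → ℝ) (hP0 : ∀ s a s', 0 ≤ P s a s') (hP1 : ∀ s a, ∑ s', P s a s' = 1)
    (γ : ℝ) (hγ0 : 0 < γ) (hγ1 : γ < 1)
    (ρ0 : S → ℝ) (hρ0 : ∀ s, 0 ≤ ρ0 s) (hρ1 : ∑ s, ρ0 s = 1)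
    (δ : ℝ) (g : ℝ) (n : ℕ) (hn : 1 ≤ n) (R : S → A → ℝ)
    (pol : ℕ → S → A → ℝ)
    (hpol0 : ∀ i ≤ n, ∀ s a, 0 ≤ pol i s a)
    (hpol1 : ∀ i ≤ n, ∀ s, ∑ a, pol i s a = 1)
    (habs : ∀ i < n, ∀ s a, pol i s a = 0 → pol (i + 1) s a = 0)
    (hKL : ∀ i < n, avgKL P γ ρ0 (pol (i + 1)) (pol i) ≤ δ)
    (hsurr : ∀ i < n,
      g ≤ Jret P γ ρ0 R (pol i) + (1 / (1 - γ)) * surrAdv P γ ρ0 R (pol i) (pol (i + 1))) :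
    Jret P γ ρ0 R (pol n) ≥
      g - (Real.sqrt (2 * δ) * γ / (1 - γ) ^ 2) *
            ∑ j ∈ Finset.range n, epsAdv P γ R (pol j) (pol (j + 1)) := by
  obtain ⟨m, rfl⟩ : ∃ m, n = m + 1 := ⟨n - 1, by omega⟩
  have hm : m < m + 1 := m.lt_succ_self
  have hlast := Jret_add_surrAdv_sub_le (F := R) hP0 hP1 hγ0.le hγ1 hρ0 hρ1 (hpol0 m hm.le)
    (hpol1 m hm.le) (hpol0 _ le_rfl) (hpol1 _ le_rfl) (habs m hm) (hKL m hm)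
  have hε := single_le_sum (f := fun j => epsAdv P γ R (pol j) (pol (j + 1)))
    (fun j _ => epsAdv_nonneg) (mem_range.2 hm)
  have hc : 0 ≤ √(2 * δ) * γ / (1 - γ) ^ 2 := by positivity
  nlinarith [hsurr m hm, mul_le_mul_of_nonneg_left hε hc]

/-- min-cost stage reward-retention bound (Lemma A.3). -/
theorem min_cost_stage_reward_retention {S A : Type*} [Fintype S] [DecidableEq S] [Fintype A] [Nonempty S] [Nonempty A]
    (P : S → A → S → ℝ) (hP0 : ∀ s a s', 0 ≤ P s a s') (hP1 : ∀ s a, ∑ s', P s a s' = 1)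
    (γ : ℝ) (hγ0 : 0 < γ) (hγ1 : γ < 1)
    (ρ0 : S → ℝ) (hρ0 : ∀ s, 0 ≤ ρ0 s) (hρ1 : ∑ s, ρ0 s = 1)
    (δ : ℝ) (hδ : 0 < δ) (g : ℝ) (n : ℕ) (hn : 1 ≤ n) (R : S → A → ℝ)
    (pol : ℕ → S → A → ℝ)
    (hpol0 : ∀ i ≤ n, ∀ s a, 0 ≤ pol i s a)
    (hpol1 : ∀ i ≤ n, ∀ s, ∑ a, pol i s a = 1)
    (habs : ∀ i < n, ∀ s a, pol i s a = 0 → pol (i + 1) s a = 0)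
    (hKL : ∀ i < n, avgKL P γ ρ0 (pol (i + 1)) (pol i) ≤ δ)
    (hsurr : ∀ i < n,
      g ≤ Jret P γ ρ0 R (pol i) + (1 / (1 - γ)) * surrAdv P γ ρ0 R (pol i) (pol (i + 1))) :
    Jret P γ ρ0 R (pol n) ≥
      g - (Real.sqrt (2 * δ) * γ / (1 - γ) ^ 2) *
            ∑ j ∈ Finset.range n, epsAdv P γ R (pol j) (pol (j + 1)) :=
  min_cost_stage_reward_retention_general P hP0 hP1 γ hγ0 hγ1 ρ0 hρ0 hρ1 δ g n hn R pol hpol0 hpol1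
    habs hKL hsurr
end

section
/- Interior-point suboptimality bound via stationarity (Theorem 5.1, convex-analytic form): let E be a real inner product space, f : E → ℝ concave on E (i.e., −f is convex on E), g : E → ℝ convex on E, and t > 0. Suppose x_I ∈ E satisfies g(x_I) < 0, f has gradient ∇f(x_I) at x_I, g has gradient ∇g(x_I) at x_I, and the stationarity condition ∇f(x_I) = (1/(t · (−g(x_I)))) • ∇g(x_I) holds (equivalently, x_I is a stationary point of x ↦ f(x) + log(−g(x))/t). Then for every x* ∈ E with g(x*) ≤ 0 such that f(x) ≤ f(x*) for all x with g(x) ≤ 0, we have 0 ≤ f(x*) − f(x_I) ≤ 1/t. -/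
/-!
Bound `f` above and `g` below by their tangent planes at `xI`. Stationarity makes the linear
part of `f` the positive multiple `1 / (t * -g xI)` of that of `g`, which is at most
`g xstar - g xI ≤ -g xI` by feasibility of `xstar`; hence `f xstar - f xI ≤ 1 / t`.
-/

open Set AffineMap
open scoped RealInnerProductSpace

section FDeriv

variable {E : Type*} [NormedAddCommGroup E] [NormedSpace ℝ E]
  {s : Set E} {f : E → ℝ} {f' : E →L[ℝ] ℝ} {x y : E}

theorem ConvexOn.add_fderiv_sub_le (hf : ConvexOn ℝ s f)
    (hx : x ∈ s) (hy : y ∈ s) (hf' : HasFDerivAt f f' x) :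
    f x + f' (y - x) ≤ f y := by
  let ℓ : ℝ →ᵃ[ℝ] E := lineMap x y
  have hℓ0 : ℓ 0 = x := lineMap_apply_zero x y
  have hℓ1 : ℓ 1 = y := lineMap_apply_one x y
  have hφ : ConvexOn ℝ (ℓ ⁻¹' s) (f ∘ ℓ) := hf.comp_affineMap ℓ
  have hφ' : HasDerivAt (f ∘ ℓ) (f' (y - x)) 0 := by
    rw [← hℓ0] at hf'
    exact hf'.comp_hasDerivAt 0 hasDerivAt_lineMap
  have hslope := hφ.le_slope_of_hasDerivAt (by simpa [hℓ0]) (by simpa [hℓ1]) zero_lt_one hφ'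
  rw [slope_def_field, Function.comp_apply, Function.comp_apply, hℓ0, hℓ1] at hslope
  linarith

theorem ConcaveOn.le_add_fderiv_sub (hf : ConcaveOn ℝ s f)
    (hx : x ∈ s) (hy : y ∈ s) (hf' : HasFDerivAt f f' x) :
    f y ≤ f x + f' (y - x) := by
  have hneg := hf.neg.add_fderiv_sub_le hx hy hf'.neg
  simp only [Pi.neg_apply, neg_apply] at hneg
  linarith

end FDeriv

section Gradient

variable {E : Type*} [NormedAddCommGroup E] [InnerProductSpace ℝ E] [CompleteSpace E]
  {s : Set E} {f : E → ℝ} {f' x y : E}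

theorem ConvexOn.add_inner_gradient_le (hf : ConvexOn ℝ s f) (hx : x ∈ s) (hy : y ∈ s)
    (hf' : HasGradientAt f f' x) : f x + ⟪f', y - x⟫ ≤ f y :=
  hf.add_fderiv_sub_le hx hy hf'.hasFDerivAt

theorem ConcaveOn.le_add_inner_gradient (hf : ConcaveOn ℝ s f) (hx : x ∈ s) (hy : y ∈ s)
    (hf' : HasGradientAt f f' x) : f y ≤ f x + ⟪f', y - x⟫ :=
  hf.le_add_fderiv_sub hx hy hf'.hasFDerivAt

end Gradient

/-- interior-point suboptimality bound via stationarity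
(Theorem 5.1, convex-analytic form). -/
theorem interior_point_suboptimality_stationarity
    {E : Type*} [NormedAddCommGroup E] [InnerProductSpace ℝ E] [CompleteSpace E]
    (f g : E → ℝ) (hf : ConcaveOn ℝ Set.univ f) (hg : ConvexOn ℝ Set.univ g)
    (t : ℝ) (ht : 0 < t) (xI : E) (hgI : g xI < 0)
    (gradf gradg : E)
    (hgradf : HasGradientAt f gradf xI) (hgradg : HasGradientAt g gradg xI)
    (hstat : gradf = (1 / (t * (-g xI))) • gradg)
    (xstar : E) (hxstar : g xstar ≤ 0) (hopt : ∀ x, g x ≤ 0 → f x ≤ f xstar) :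
    0 ≤ f xstar - f xI ∧ f xstar - f xI ≤ 1 / t := by
  refine ⟨sub_nonneg.mpr (hopt xI hgI.le), ?_⟩
  have hf_tangent := hf.le_add_inner_gradient (mem_univ _) (mem_univ xstar) hgradf
  have hg_tangent := hg.add_inner_gradient_le (mem_univ _) (mem_univ xstar) hgradg
  have hc : 0 ≤ 1 / (t * -g xI) := one_div_nonneg.mpr (mul_pos ht (neg_pos.mpr hgI)).le
  calc f xstar - f xI ≤ ⟪gradf, xstar - xI⟫ := by linarith
    _ = 1 / (t * -g xI) * ⟪gradg, xstar - xI⟫ := by rw [hstat, real_inner_smul_left]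
    _ ≤ 1 / (t * -g xI) * -g xI := by gcongr; linarith
    _ = 1 / t := by field_simp [hgI.ne]
end
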